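/- arXiv:2202.00074 — 4 statements merged into one kernel-verified Lean document; each statement's English description precedes it below -/
import Mathlib

section
/- For any p ≥ 1, λ > 0 and x > 0, the tail integral of the exponential power density satisfies (e^{-λx^p}/(λ p x^{p-1}))·(1 + (1-p)/(λ p x^p)) ≤ ∫_x^∞ e^{-λt^p} dt ≤ e^{-λx^p}/(λ p x^{p-1}). -/
/-!
With `f t = exp (-λ t ^ p)` we have `f' t = -λ p t ^ (p - 1) f t`, so integrating `t ^ s f t` by
parts gives `λ p ∫ₓ^∞ t ^ (s + p - 1) f = x ^ s f x + s ∫ₓ^∞ t ^ (s - 1) f`, and for `s ≤ 0` the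
comparison `t ^ (s + p - 1) ≤ x ^ s t ^ (p - 1)` gives `∫ₓ^∞ t ^ (s + p - 1) f ≤ x ^ s f x / (λ p)`.
The case `s = 1 - p` of the comparison is the upper bound. The lower bound is the case `s = 1 - p`
of the recurrence, in which the remainder `(1 - p) ∫ₓ^∞ t ^ (-p) f` is bounded below by the
comparison with `s = 1 - 2 p`.
-/

open Real MeasureTheory Set Filter Topology

section

variable {p lam : ℝ}

theorem hasDerivAt_exp_neg_mul_rpow {t : ℝ} (ht : 0 < t) :
    HasDerivAt (fun t => exp (-lam * t ^ p))
      (-(lam * p) * (t ^ (p - 1) * exp (-lam * t ^ p))) t := by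
  convert ((hasDerivAt_rpow_const (p := p) (Or.inl ht.ne')).const_mul (-lam)).exp using 1
  ring

theorem tendsto_rpow_mul_exp_neg_mul_rpow_atTop_nhds_zero (s : ℝ) (hp : 0 < p) (hlam : 0 < lam) :
    Tendsto (fun t => t ^ s * exp (-lam * t ^ p)) atTop (𝓝 0) := by
  refine ((tendsto_rpow_mul_exp_neg_mul_atTop_nhds_zero (s / p) lam hlam).comp
    (tendsto_rpow_atTop hp)).congr' ?_
  filter_upwards [eventually_ge_atTop 0] with t ht
  simp only [Function.comp_apply, ← rpow_mul ht, mul_div_cancel₀ s hp.ne']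

variable {x : ℝ}

theorem integrableOn_Ioi_rpow_mul_exp_neg_mul_rpow (s : ℝ) (hx : 0 < x) (hp : 0 < p)
    (hlam : 0 < lam) : IntegrableOn (fun t => t ^ s * exp (-lam * t ^ p)) (Ioi x) := by
  set q := max s 0
  have hq : IntegrableOn (fun t => t ^ q * exp (-lam * t ^ p)) (Ioi x) :=
    (integrableOn_rpow_mul_exp_neg_mul_rpow (lt_max_of_lt_right neg_one_lt_zero) hp hlam).mono_set
      (Ioi_subset_Ioi hx.le)
  refine (hq.const_mul (x ^ (s - q))).mono' ?_ ?_
  · refine ContinuousOn.aestronglyMeasurable ?_ measurableSet_Ioi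
    exact (continuousOn_id.rpow_const fun t ht => Or.inl (hx.trans ht).ne').mul
      (continuous_exp.comp (continuous_const.mul
        (continuous_id.rpow_const fun _ => Or.inr hp.le))).continuousOn
  · filter_upwards [ae_restrict_mem measurableSet_Ioi] with t (ht : x < t)
    have ht0 : 0 < t := hx.trans ht
    rw [norm_of_nonneg (by positivity), ← mul_assoc, show t ^ s = t ^ (s - q) * t ^ q by
      rw [← rpow_add ht0, sub_add_cancel]]
    gcongr ?_ * _ * _
    exact rpow_le_rpow_of_nonpos hx ht.le (sub_nonpos.2 (le_max_left s 0))

theorem integral_Ioi_rpow_mul_exp_neg_mul_rpow_recurrence (s : ℝ) (hx : 0 < x) (hp : 0 < p)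
    (hlam : 0 < lam) :
    lam * p * ∫ t in Ioi x, t ^ (s + p - 1) * exp (-lam * t ^ p)
      = x ^ s * exp (-lam * x ^ p) + s * ∫ t in Ioi x, t ^ (s - 1) * exp (-lam * t ^ p) := by
  have hderiv : ∀ t ∈ Ici x, HasDerivAt (fun t => t ^ s * exp (-lam * t ^ p))
      (s * (t ^ (s - 1) * exp (-lam * t ^ p))
        - lam * p * (t ^ (s + p - 1) * exp (-lam * t ^ p))) t := by
    intro t (ht : x ≤ t)
    have ht0 : 0 < t := hx.trans_le ht
    refine ((hasDerivAt_rpow_const (p := s) (Or.inl ht0.ne')).mul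
      (hasDerivAt_exp_neg_mul_rpow ht0)).congr_deriv ?_
    rw [add_sub_assoc, rpow_add ht0]
    ring
  have hint := fun r => integrableOn_Ioi_rpow_mul_exp_neg_mul_rpow (lam := lam) (p := p) r hx hp
    hlam
  have hftc := integral_Ioi_of_hasDerivAt_of_tendsto' hderiv
    (((hint _).const_mul s).sub ((hint _).const_mul (lam * p)))
    (tendsto_rpow_mul_exp_neg_mul_rpow_atTop_nhds_zero s hp hlam)
  rw [integral_sub ((hint _).const_mul s) ((hint _).const_mul (lam * p)), integral_const_mul,
    integral_const_mul] at hftc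
  linarith

theorem integral_Ioi_rpow_sub_one_mul_exp_neg_mul_rpow (hx : 0 < x) (hp : 0 < p)
    (hlam : 0 < lam) :
    ∫ t in Ioi x, t ^ (p - 1) * exp (-lam * t ^ p) = exp (-lam * x ^ p) / (lam * p) := by
  have h := integral_Ioi_rpow_mul_exp_neg_mul_rpow_recurrence 0 hx hp hlam
  rw [zero_add, rpow_zero, one_mul, zero_mul, add_zero] at h
  rw [eq_div_iff (by positivity), ← h, mul_comm]

theorem integral_Ioi_rpow_add_sub_one_mul_exp_neg_mul_rpow_le {s : ℝ} (hs : s ≤ 0) (hx : 0 < x)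
    (hp : 0 < p) (hlam : 0 < lam) :
    ∫ t in Ioi x, t ^ (s + p - 1) * exp (-lam * t ^ p)
      ≤ x ^ s * exp (-lam * x ^ p) / (lam * p) := by
  have hint := fun r => integrableOn_Ioi_rpow_mul_exp_neg_mul_rpow (lam := lam) (p := p) r hx hp
    hlam
  calc ∫ t in Ioi x, t ^ (s + p - 1) * exp (-lam * t ^ p)
      ≤ ∫ t in Ioi x, x ^ s * (t ^ (p - 1) * exp (-lam * t ^ p)) := by
        refine setIntegral_mono_on (hint _) ((hint _).const_mul _) measurableSet_Ioi ?_
        intro t (ht : x < t)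
        rw [add_sub_assoc, rpow_add (hx.trans ht), mul_assoc]
        exact mul_le_mul_of_nonneg_right (rpow_le_rpow_of_nonpos hx ht.le hs)
          (mul_nonneg (rpow_nonneg (hx.trans ht).le _) (exp_pos _).le)
    _ = x ^ s * exp (-lam * x ^ p) / (lam * p) := by
        rw [integral_const_mul, integral_Ioi_rpow_sub_one_mul_exp_neg_mul_rpow hx hp hlam,
          mul_div_assoc]

end

theorem exp_power_tail_bounds (p lam x : ℝ) (hp : 1 ≤ p) (hlam : 0 < lam) (hx : 0 < x) :
    (Real.exp (-lam * x ^ p) / (lam * p * x ^ (p - 1))) * (1 + (1 - p) / (lam * p * x ^ p))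
      ≤ ∫ t in Set.Ioi x, Real.exp (-lam * t ^ p) ∧
    ∫ t in Set.Ioi x, Real.exp (-lam * t ^ p)
      ≤ Real.exp (-lam * x ^ p) / (lam * p * x ^ (p - 1)) := by
  have hp0 : 0 < p := zero_lt_one.trans_le hp
  have hrec := integral_Ioi_rpow_mul_exp_neg_mul_rpow_recurrence (1 - p) hx hp0 hlam
  have hupper := integral_Ioi_rpow_add_sub_one_mul_exp_neg_mul_rpow_le
    (sub_nonpos.2 hp) hx hp0 hlam
  have hlower := integral_Ioi_rpow_add_sub_one_mul_exp_neg_mul_rpow_le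
    (s := 1 - 2 * p) (by linarith) hx hp0 hlam
  simp only [show 1 - p + p - 1 = 0 by ring, show 1 - p - 1 = -p by ring,
    show 1 - 2 * p + p - 1 = -p by ring, rpow_zero, one_mul] at hrec hupper hlower
  have hx₁ : x ^ (1 - p) = (x ^ (p - 1))⁻¹ := by rw [← rpow_neg hx.le, neg_sub]
  have hx₂ : x ^ (1 - 2 * p) = (x ^ (p - 1) * x ^ p)⁻¹ := by
    rw [← rpow_add hx, ← rpow_neg hx.le]; ring_nf
  have hxp : 0 < x ^ p := rpow_pos_of_pos hx p
  have hxp₁ : 0 < x ^ (p - 1) := rpow_pos_of_pos hx _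
  rw [hx₁] at hupper hrec
  rw [hx₂] at hlower
  constructor
  · calc _ = ((x ^ (p - 1))⁻¹ * exp (-lam * x ^ p)
              + (1 - p) * ((x ^ (p - 1) * x ^ p)⁻¹ * exp (-lam * x ^ p) / (lam * p)))
            / (lam * p) := by
          field_simp
      _ ≤ ((x ^ (p - 1))⁻¹ * exp (-lam * x ^ p)
              + (1 - p) * ∫ t in Ioi x, t ^ (-p) * exp (-lam * t ^ p)) / (lam * p) := by
          gcongr ?_ / _
          exact add_le_add_right (mul_le_mul_of_nonpos_left hlower (sub_nonpos.2 hp)) _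
      _ = _ := by rw [← hrec]; field_simp
  · refine hupper.trans_eq ?_
    field_simp
end

section
/- Let T(z) = (P⁰)^{-1}(Φ⁰(z)) be the monotone transport map pushing the standard normal to the Laplace distribution with density π⁰(x) = (λ/2)e^{-λ|x|}, λ > 0. Then for z > 0, T(z) = -(1/λ)·log(2Φ⁰(-z)), and T(z) ~ z²/(2λ) as z → ∞. -/
open Real MeasureTheory Filter

/-- The standard normal cumulative distribution function. -/
noncomputable def stdNormalCDF (z : ℝ) : ℝ :=
  ∫ t in Set.Iic z, (1 / Real.sqrt (2 * Real.pi)) * Real.exp (-t ^ 2 / 2)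

/-- The CDF of the Laplace distribution with parameter `lam`. -/
noncomputable def laplaceCDF (lam : ℝ) (x : ℝ) : ℝ :=
  ∫ t in Set.Iic x, (lam / 2) * Real.exp (-lam * |t|)

/-!
Write `Φ = stdNormalCDF` and `φ = gaussianPDFReal 0 1`. For `z > 0` we have `Φ(z) > 1/2`, so
`T z` lies on the half-line `x > 0`, where the Laplace CDF is `1 - e^{-λx}/2` and inverts
explicitly: `e^{-λ T z} = 2 (1 - Φ(z)) = 2 Φ(-z)`. The asymptotics reduce to
`-log (2 Φ(-z)) ~ z²/2`, which follows from the Gaussian tail bounds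
`φ(z + 1) ≤ Φ(-z) ≤ φ(z) / z`.
-/

open Set ProbabilityTheory Topology

lemma tendsto_div_half_sq_of_mem_Icc {f : ℝ → ℝ} (c : ℝ)
    (hf : ∀ᶠ z in atTop, f z ∈ Icc (z ^ 2 / 2 + c) ((z + 1) ^ 2 / 2 + c)) :
    Tendsto (fun z => f z / (z ^ 2 / 2)) atTop (𝓝 1) := by
  have hsmall : Tendsto (fun z : ℝ => 2 * c / z ^ 2) atTop (𝓝 0) :=
    tendsto_const_nhds.div_atTop (tendsto_pow_atTop two_ne_zero)
  have hinv : Tendsto (fun z : ℝ => 1 / z) atTop (𝓝 0) :=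
    tendsto_const_nhds.div_atTop tendsto_id
  have hlower : Tendsto (fun z : ℝ => 1 + 2 * c / z ^ 2) atTop (𝓝 1) := by
    simpa using hsmall.const_add 1
  have hupper : Tendsto (fun z : ℝ => (1 + 1 / z) ^ 2 + 2 * c / z ^ 2) atTop (𝓝 1) := by
    simpa using ((hinv.const_add 1).pow 2).add hsmall
  refine tendsto_of_tendsto_of_tendsto_of_le_of_le' hlower hupper ?_ ?_ <;>
    filter_upwards [hf, eventually_gt_atTop 0] with z ⟨hfl, hfu⟩ hz
  · rw [le_div_iff₀ (by positivity)]
    field_simp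
    linarith
  · rw [div_le_iff₀ (by positivity)]
    field_simp
    linarith

lemma stdNormalCDF_eq_integral_gaussianPDFReal (z : ℝ) :
    stdNormalCDF z = ∫ t in Iic z, gaussianPDFReal 0 1 t := by
  simp [stdNormalCDF, gaussianPDFReal, div_eq_inv_mul]

lemma gaussianPDFReal_zero_one_neg (t : ℝ) :
    gaussianPDFReal 0 1 (-t) = gaussianPDFReal 0 1 t := by
  simp [gaussianPDFReal]

lemma stdNormalCDF_add_stdNormalCDF_neg (z : ℝ) : stdNormalCDF z + stdNormalCDF (-z) = 1 := by
  have hsymm : stdNormalCDF (-z) = ∫ t in Ioi z, gaussianPDFReal 0 1 t := by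
    simp only [stdNormalCDF_eq_integral_gaussianPDFReal, ← integral_comp_neg_Ioi,
      gaussianPDFReal_zero_one_neg]
  rw [hsymm, stdNormalCDF_eq_integral_gaussianPDFReal, intervalIntegral.integral_Iic_add_Ioi
    (integrable_gaussianPDFReal 0 1).integrableOn (integrable_gaussianPDFReal 0 1).integrableOn,
    integral_gaussianPDFReal_eq_one 0 one_ne_zero]

lemma one_half_lt_stdNormalCDF {z : ℝ} (hz : 0 < z) : 1 / 2 < stdNormalCDF z := by
  have hzero : stdNormalCDF 0 = 1 / 2 := by
    linarith [neg_zero (G := ℝ) ▸ stdNormalCDF_add_stdNormalCDF_neg 0]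
  have hinc : stdNormalCDF z - stdNormalCDF 0 = ∫ t in 0..z, gaussianPDFReal 0 1 t := by
    simp only [stdNormalCDF_eq_integral_gaussianPDFReal]
    exact intervalIntegral.integral_Iic_sub_Iic (integrable_gaussianPDFReal 0 1).integrableOn
      (integrable_gaussianPDFReal 0 1).integrableOn
  have hpos : 0 < ∫ t in 0..z, gaussianPDFReal 0 1 t :=
    intervalIntegral.intervalIntegral_pos_of_pos_on
      (integrable_gaussianPDFReal 0 1).intervalIntegrable
      (fun t _ => gaussianPDFReal_pos 0 1 t one_ne_zero) hz
  linarith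

lemma log_gaussianPDFReal_zero_one (x : ℝ) :
    Real.log (gaussianPDFReal 0 1 x) = -(x ^ 2 / 2) - Real.log √(2 * π) := by
  have hsqrt : (0 : ℝ) < √(2 * π) := by positivity
  rw [gaussianPDFReal, Real.log_mul (inv_pos.2 (by simpa using hsqrt)).ne' (exp_ne_zero _),
    Real.log_inv, Real.log_exp]
  simp only [NNReal.coe_one, mul_one, sub_zero]
  ring

/-- On `(-∞, -z]` the Gaussian density is dominated by the exponential whose logarithm is the
tangent line of `log φ` at `-z`. -/
lemma stdNormalCDF_neg_le_gaussianPDFReal_div {z : ℝ} (hz : 0 < z) :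
    stdNormalCDF (-z) ≤ gaussianPDFReal 0 1 z / z := by
  have hdom : ∀ t,
      gaussianPDFReal 0 1 t ≤ gaussianPDFReal 0 1 z * rexp (z ^ 2) * rexp (z * t) := by
    intro t
    simp only [gaussianPDFReal, mul_assoc, ← Real.exp_add]
    gcongr
    simp only [NNReal.coe_one]
    nlinarith [sq_nonneg (z + t)]
  calc stdNormalCDF (-z)
      ≤ ∫ t in Iic (-z), gaussianPDFReal 0 1 z * rexp (z ^ 2) * rexp (z * t) := by
        rw [stdNormalCDF_eq_integral_gaussianPDFReal]
        exact setIntegral_mono (integrable_gaussianPDFReal 0 1).integrableOn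
          ((integrableOn_exp_mul_Iic hz _).const_mul _) hdom
    _ = gaussianPDFReal 0 1 z / z := by
        rw [integral_const_mul, integral_exp_mul_Iic hz, mul_div_assoc', mul_assoc,
          ← Real.exp_add, show z ^ 2 + z * -z = 0 by ring, Real.exp_zero, mul_one]

lemma gaussianPDFReal_add_one_le_stdNormalCDF_neg {z : ℝ} (hz : 0 ≤ z) :
    gaussianPDFReal 0 1 (z + 1) ≤ stdNormalCDF (-z) := by
  have hmin : ∀ t ∈ Ioc (-z - 1) (-z),
      gaussianPDFReal 0 1 (z + 1) ≤ gaussianPDFReal 0 1 t := by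
    rintro t ⟨ht₁, ht₂⟩
    simp only [gaussianPDFReal]
    gcongr _ * rexp ?_
    simp only [NNReal.coe_one, sub_zero]
    nlinarith
  calc gaussianPDFReal 0 1 (z + 1)
      ≤ ∫ t in Ioc (-z - 1) (-z), gaussianPDFReal 0 1 t := by
        simpa using setIntegral_ge_of_const_le_real measurableSet_Ioc (by simp) hmin
          (integrable_gaussianPDFReal 0 1).integrableOn
    _ ≤ stdNormalCDF (-z) := by
        rw [stdNormalCDF_eq_integral_gaussianPDFReal]
        exact setIntegral_mono_set (integrable_gaussianPDFReal 0 1).integrableOn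
          (ae_of_all _ (gaussianPDFReal_nonneg 0 1)) Ioc_subset_Iic_self.eventuallyLE

noncomputable def laplacePDF (lam t : ℝ) : ℝ := lam / 2 * rexp (-lam * |t|)

lemma laplaceCDF_eq_integral_laplacePDF (lam x : ℝ) :
    laplaceCDF lam x = ∫ t in Iic x, laplacePDF lam t := rfl

section Laplace

variable {lam : ℝ}

lemma integrable_laplacePDF (hlam : 0 < lam) : Integrable (laplacePDF lam) := by
  rw [← integrableOn_univ, ← Iic_union_Ioi (a := 0), integrableOn_union]
  constructor
  · refine IntegrableOn.congr_fun ((integrableOn_exp_mul_Iic hlam 0).const_mul (lam / 2))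
      (fun t ht => ?_) measurableSet_Iic
    rw [laplacePDF, abs_of_nonpos ht, neg_mul_neg]
  · refine IntegrableOn.congr_fun ((exp_neg_integrableOn_Ioi 0 hlam).const_mul (lam / 2))
      (fun t ht => ?_) measurableSet_Ioi
    rw [laplacePDF, abs_of_pos ht]

lemma laplaceCDF_of_nonpos (hlam : 0 < lam) {x : ℝ} (hx : x ≤ 0) :
    laplaceCDF lam x = rexp (lam * x) / 2 := by
  have hdens : EqOn (laplacePDF lam) (fun t => lam / 2 * rexp (lam * t)) (Iic x) :=
    fun t ht => by
      rw [laplacePDF, abs_of_nonpos (le_trans ht hx), neg_mul_neg]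
  rw [laplaceCDF_eq_integral_laplacePDF, setIntegral_congr_fun measurableSet_Iic hdens,
    integral_const_mul, integral_exp_mul_Iic hlam]
  field_simp

lemma integral_laplacePDF_Ioi (hlam : 0 < lam) {x : ℝ} (hx : 0 ≤ x) :
    ∫ t in Ioi x, laplacePDF lam t = rexp (-lam * x) / 2 := by
  have hdens : EqOn (laplacePDF lam) (fun t => lam / 2 * rexp (-lam * t)) (Ioi x) :=
    fun t ht => by
      rw [laplacePDF, abs_of_pos (lt_of_le_of_lt hx ht)]
  rw [setIntegral_congr_fun measurableSet_Ioi hdens, integral_const_mul,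
    integral_exp_mul_Ioi (neg_lt_zero.2 hlam)]
  field_simp

lemma laplaceCDF_add_integral_laplacePDF_Ioi (hlam : 0 < lam) (x : ℝ) :
    laplaceCDF lam x + ∫ t in Ioi x, laplacePDF lam t = ∫ t, laplacePDF lam t :=
  intervalIntegral.integral_Iic_add_Ioi (integrable_laplacePDF hlam).integrableOn
    (integrable_laplacePDF hlam).integrableOn

lemma integral_laplacePDF (hlam : 0 < lam) : ∫ t, laplacePDF lam t = 1 := by
  rw [← laplaceCDF_add_integral_laplacePDF_Ioi hlam 0, laplaceCDF_of_nonpos hlam le_rfl,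
    integral_laplacePDF_Ioi hlam le_rfl]
  norm_num

lemma laplaceCDF_of_nonneg (hlam : 0 < lam) {x : ℝ} (hx : 0 ≤ x) :
    laplaceCDF lam x = 1 - rexp (-lam * x) / 2 := by
  have := laplaceCDF_add_integral_laplacePDF_Ioi hlam x
  rw [integral_laplacePDF hlam, integral_laplacePDF_Ioi hlam hx] at this
  linarith

lemma eq_neg_log_of_one_half_lt_laplaceCDF (hlam : 0 < lam) {x : ℝ}
    (hx : 1 / 2 < laplaceCDF lam x) :
    x = -(1 / lam) * Real.log (2 * (1 - laplaceCDF lam x)) := by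
  have hxpos : 0 < x := by
    by_contra! hxnonpos
    rw [laplaceCDF_of_nonpos hlam hxnonpos] at hx
    linarith [Real.exp_le_one_iff.2 (mul_nonpos_of_nonneg_of_nonpos hlam.le hxnonpos)]
  rw [laplaceCDF_of_nonneg hlam hxpos.le, show 2 * (1 - (1 - rexp (-lam * x) / 2)) =
    rexp (-lam * x) by ring, Real.log_exp]
  field_simp

end Laplace

lemma neg_log_two_mul_stdNormalCDF_neg_mem_Icc {z : ℝ} (hz : 1 ≤ z) :
    -Real.log (2 * stdNormalCDF (-z)) ∈
      Icc (z ^ 2 / 2 + Real.log (√(2 * π) / 2))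
        ((z + 1) ^ 2 / 2 + Real.log (√(2 * π) / 2)) := by
  have hz₀ : 0 < z := by linarith
  have hlower := gaussianPDFReal_add_one_le_stdNormalCDF_neg hz₀.le
  have hupper := stdNormalCDF_neg_le_gaussianPDFReal_div hz₀
  have hpdf₀ := gaussianPDFReal_pos 0 1 z one_ne_zero
  have hpdf₁ := gaussianPDFReal_pos 0 1 (z + 1) one_ne_zero
  have hlog_le : Real.log (2 * stdNormalCDF (-z)) ≤ Real.log (2 * (gaussianPDFReal 0 1 z / z)) :=
    Real.log_le_log (by linarith) (by linarith)
  have hlog_ge : Real.log (2 * gaussianPDFReal 0 1 (z + 1)) ≤ Real.log (2 * stdNormalCDF (-z)) :=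
    Real.log_le_log (by linarith) (by linarith)
  rw [Real.log_mul two_ne_zero (div_pos hpdf₀ hz₀).ne', Real.log_div hpdf₀.ne' hz₀.ne',
    log_gaussianPDFReal_zero_one] at hlog_le
  rw [Real.log_mul two_ne_zero hpdf₁.ne', log_gaussianPDFReal_zero_one] at hlog_ge
  rw [Real.log_div (by positivity) two_ne_zero]
  constructor <;> linarith [Real.log_nonneg hz]

lemma tendsto_neg_log_two_mul_stdNormalCDF_neg :
    Tendsto (fun z => -Real.log (2 * stdNormalCDF (-z)) / (z ^ 2 / 2)) atTop (𝓝 1) :=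
  tendsto_div_half_sq_of_mem_Icc _
    ((eventually_ge_atTop 1).mono fun _ hz => neg_log_two_mul_stdNormalCDF_neg_mem_Icc hz)

theorem laplace_transport_formula_and_asymptotics (lam : ℝ) (hlam : 0 < lam)
    (T : ℝ → ℝ) (hT : ∀ z, laplaceCDF lam (T z) = stdNormalCDF z) :
    (∀ z, 0 < z → T z = -(1 / lam) * Real.log (2 * stdNormalCDF (-z))) ∧
    Tendsto (fun z => T z / (z ^ 2 / (2 * lam))) atTop (nhds 1) := by
  have hformula : ∀ z, 0 < z → T z = -(1 / lam) * Real.log (2 * stdNormalCDF (-z)) := by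
    intro z hz
    have hhalf : 1 / 2 < laplaceCDF lam (T z) := hT z ▸ one_half_lt_stdNormalCDF hz
    rw [eq_neg_log_of_one_half_lt_laplaceCDF hlam hhalf, hT z,
      ← stdNormalCDF_add_stdNormalCDF_neg z, add_sub_cancel_left]
  refine ⟨hformula, tendsto_neg_log_two_mul_stdNormalCDF_neg.congr' ?_⟩
  filter_upwards [eventually_gt_atTop 0] with z hz
  rw [hformula z hz]
  field_simp
end

section
/- Let T(z) = (P⁰)^{-1}(Φ⁰(z)) be the monotone transport map pushing the standard normal to the exponential power distribution with density proportional to e^{-λ|x|^p}, p, λ > 0. Then T(z) ~ (z²/(2λ))^{1/p} as z → ∞. -/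
open Real MeasureTheory Filter

/-- Normalizing constant of the exponential power distribution. -/
noncomputable def expPowerZ (p lam : ℝ) : ℝ := ∫ x : ℝ, Real.exp (-lam * |x| ^ p)

/-- The CDF of the exponential power distribution with parameters `p, lam`. -/
noncomputable def expPowerCDF (p lam : ℝ) (x : ℝ) : ℝ :=
  ∫ t in Set.Iic x, (expPowerZ p lam)⁻¹ * Real.exp (-lam * |t| ^ p)

/-!
Both tails are stretched exponentials: `∫_x^∞ exp (-b t^p) dt = exp (-(1 + o(1)) b x^p)`.
The upper bound comes from `exp (-b t^p) ≤ exp (-c b x^p) exp (-(1 - c) b t^p)` for `t ≥ x`,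
`c < 1`, the lower bound from the integral over `[x, x + 1]`. Since `T z → ∞` and
`1 - P⁰ (T z) = 1 - Φ⁰ z`, comparing logarithms of the two tails gives `λ T(z)^p ~ z²/2`.
-/

open Set Topology

section RatioLimits

variable {α : Type*} {l : Filter α}

theorem tendsto_div_nhds_one_of_eventually_le {u g : α → ℝ} (hg : ∀ᶠ x in l, 0 < g x)
    (hlo : ∀ c ∈ Ico (0 : ℝ) 1, ∀ᶠ x in l, c * g x ≤ u x)
    (hhi : ∀ c > 1, ∀ᶠ x in l, u x ≤ c * g x) :
    Tendsto (fun x => u x / g x) l (𝓝 1) := by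
  rw [tendsto_order]
  refine ⟨fun a ha => ?_, fun a ha => ?_⟩
  · set c := max ((a + 1) / 2) 0
    have hac : a < c := by
      rcases le_or_gt 0 a with h | h
      · exact (by linarith : a < (a + 1) / 2).trans_le (le_max_left _ _)
      · exact h.trans_le (le_max_right _ _)
    filter_upwards [hg, hlo c ⟨le_max_right _ _, max_lt (by linarith) one_pos⟩] with x hgx hx
    rw [lt_div_iff₀ hgx]
    exact (mul_lt_mul_of_pos_right hac hgx).trans_le hx
  · filter_upwards [hg, hhi ((a + 1) / 2) (by linarith)] with x hgx hx
    rw [div_lt_iff₀ hgx]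
    nlinarith

theorem Filter.Tendsto.const_add_div_of_tendsto_atTop {u g : α → ℝ}
    (h : Tendsto (fun x => u x / g x) l (𝓝 1)) (hg : Tendsto g l atTop) (k : ℝ) :
    Tendsto (fun x => (k + u x) / g x) l (𝓝 1) := by
  simpa only [add_div, zero_add] using (tendsto_const_nhds.div_atTop hg).add h

theorem tendsto_div_of_tendsto_div_nhds_one {u a b : α → ℝ}
    (ha : Tendsto (fun x => u x / a x) l (𝓝 1)) (hb : Tendsto (fun x => u x / b x) l (𝓝 1)) :
    Tendsto (fun x => a x / b x) l (𝓝 1) := by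
  have hba := hb.div ha one_ne_zero
  rw [div_one] at hba
  refine hba.congr' ?_
  filter_upwards [hb.eventually_ne one_ne_zero] with x hx
  exact div_div_div_cancel_left' _ _ fun hu => hx (by rw [hu, zero_div])

theorem tendsto_div_rpow_one_div_of_tendsto_rpow_div {p : ℝ} (hp : 0 < p) {x y : α → ℝ}
    (hx : ∀ᶠ i in l, 0 ≤ x i) (hy : ∀ i, 0 ≤ y i)
    (h : Tendsto (fun i => x i ^ p / y i) l (𝓝 1)) :
    Tendsto (fun i => x i / y i ^ (1 / p)) l (𝓝 1) := by
  have hroot := h.rpow_const (p := 1 / p) (Or.inl one_ne_zero)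
  rw [one_rpow] at hroot
  refine hroot.congr' ?_
  filter_upwards [hx] with i hxi
  rw [div_rpow (rpow_nonneg hxi p) (hy i), one_div, rpow_rpow_inv hxi hp.ne']

theorem tendsto_atTop_of_monotone_of_comp_eq {F : ℝ → ℝ} {G T : α → ℝ} {a : ℝ}
    (hF : Monotone F) (hFa : ∀ x, F x < a) (hG : Tendsto G l (𝓝 a))
    (hT : ∀ z, F (T z) = G z) : Tendsto T l atTop := by
  rw [tendsto_atTop]
  intro M
  filter_upwards [hG.eventually_const_lt (hFa M)] with z hz
  exact (hF.reflect_lt (hz.trans_eq (hT z).symm)).le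

end RatioLimits


theorem setIntegral_Ioi_exp_pos {f : ℝ → ℝ} (x : ℝ)
    (hf : IntegrableOn (fun t => exp (f t)) (Ioi x)) : 0 < ∫ t in Ioi x, exp (f t) :=
  have : NeZero (volume.restrict (Ioi x)) := ⟨by simp⟩
  integral_exp_pos hf

theorem eventually_add_one_rpow_le (p : ℝ) {c : ℝ} (hc : 1 < c) :
    ∀ᶠ x : ℝ in atTop, (x + 1) ^ p ≤ c * x ^ p := by
  have hratio : Tendsto (fun x : ℝ => (1 + x⁻¹) ^ p) atTop (𝓝 1) := by
    simpa using (tendsto_inv_atTop_zero.const_add 1).rpow_const (p := p) (by simp)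
  filter_upwards [hratio.eventually_le_const hc, eventually_gt_atTop 0] with x hx hx0
  calc (x + 1) ^ p = (1 + x⁻¹) ^ p * x ^ p := by
        rw [← mul_rpow (by positivity) hx0.le, add_mul, one_mul, inv_mul_cancel₀ hx0.ne', add_comm]
    _ ≤ c * x ^ p := mul_le_mul_of_nonneg_right hx (rpow_nonneg hx0.le p)

section ExpNegMulRpowTail

variable {b p : ℝ}

theorem integrableOn_Ioi_exp_neg_mul_rpow (hp : 0 < p) (hb : 0 < b) {x : ℝ} (hx : 0 ≤ x) :
    IntegrableOn (fun t => exp (-b * t ^ p)) (Ioi x) := by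
  simpa using (integrableOn_rpow_mul_exp_neg_mul_rpow neg_one_lt_zero hp hb).mono_set
    (Ioi_subset_Ioi hx)

theorem setIntegral_Ioi_exp_neg_mul_rpow_le (hp : 0 < p) (hb : 0 < b) {c : ℝ} (hc0 : 0 ≤ c)
    (hc1 : c < 1) {x : ℝ} (hx : 0 ≤ x) :
    ∫ t in Ioi x, exp (-b * t ^ p)
      ≤ exp (-(c * (b * x ^ p))) * ∫ t in Ioi 0, exp (-((1 - c) * b) * t ^ p) := by
  have hrest : 0 < (1 - c) * b := by nlinarith
  calc ∫ t in Ioi x, exp (-b * t ^ p)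
      ≤ ∫ t in Ioi x, exp (-(c * (b * x ^ p))) * exp (-((1 - c) * b) * t ^ p) := by
        refine setIntegral_mono_on (integrableOn_Ioi_exp_neg_mul_rpow hp hb hx)
          ((integrableOn_Ioi_exp_neg_mul_rpow hp hrest hx).const_mul _) measurableSet_Ioi
          fun t ht => ?_
        rw [← exp_add, exp_le_exp]
        have := rpow_le_rpow hx (le_of_lt ht) hp.le
        nlinarith [mul_nonneg hc0 hb.le]
    _ = exp (-(c * (b * x ^ p))) * ∫ t in Ioi x, exp (-((1 - c) * b) * t ^ p) :=
        integral_const_mul _ _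
    _ ≤ exp (-(c * (b * x ^ p))) * ∫ t in Ioi 0, exp (-((1 - c) * b) * t ^ p) := by
        refine mul_le_mul_of_nonneg_left ?_ (exp_pos _).le
        exact setIntegral_mono_set (integrableOn_Ioi_exp_neg_mul_rpow hp hrest le_rfl)
          (Eventually.of_forall fun t => (exp_pos _).le) (Ioi_subset_Ioi hx).eventuallyLE

theorem eventually_setIntegral_Ioi_exp_neg_mul_rpow_le (hp : 0 < p) (hb : 0 < b) {c : ℝ}
    (hc0 : 0 ≤ c) (hc1 : c < 1) :
    ∀ᶠ x in atTop, ∫ t in Ioi x, exp (-b * t ^ p) ≤ exp (-(c * (b * x ^ p))) := by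
  set c' := (c + 1) / 2 with hc'
  set C := ∫ t in Ioi 0, exp (-((1 - c') * b) * t ^ p)
  have hgrowth : Tendsto (fun x : ℝ => exp ((c' - c) * (b * x ^ p))) atTop atTop :=
    tendsto_exp_atTop.comp
      (((tendsto_rpow_atTop hp).const_mul_atTop hb).const_mul_atTop (by linarith))
  filter_upwards [eventually_ge_atTop 0, hgrowth.eventually_ge_atTop C] with x hx hC
  calc ∫ t in Ioi x, exp (-b * t ^ p)
      ≤ exp (-(c' * (b * x ^ p))) * C :=
        setIntegral_Ioi_exp_neg_mul_rpow_le hp hb (by positivity) (by linarith) hx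
    _ ≤ exp (-(c' * (b * x ^ p))) * exp ((c' - c) * (b * x ^ p)) := by gcongr
    _ = exp (-(c * (b * x ^ p))) := by rw [← exp_add]; ring_nf

theorem exp_neg_mul_add_one_rpow_le_setIntegral_Ioi (hp : 0 < p) (hb : 0 < b) {x : ℝ}
    (hx : 0 ≤ x) : exp (-b * (x + 1) ^ p) ≤ ∫ t in Ioi x, exp (-b * t ^ p) := by
  have hint := integrableOn_Ioi_exp_neg_mul_rpow hp hb hx
  calc exp (-b * (x + 1) ^ p) = ∫ _ in Ioc x (x + 1), exp (-b * (x + 1) ^ p) := by simp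
    _ ≤ ∫ t in Ioc x (x + 1), exp (-b * t ^ p) := by
        refine setIntegral_mono_on (by simp) (hint.mono_set Ioc_subset_Ioi_self)
          measurableSet_Ioc fun t ht => ?_
        have := rpow_le_rpow (hx.trans ht.1.le) ht.2 hp.le
        rw [exp_le_exp]
        nlinarith
    _ ≤ ∫ t in Ioi x, exp (-b * t ^ p) :=
        setIntegral_mono_set hint (Eventually.of_forall fun t => (exp_pos _).le)
          Ioc_subset_Ioi_self.eventuallyLE

theorem eventually_exp_le_setIntegral_Ioi_exp_neg_mul_rpow (hp : 0 < p) (hb : 0 < b) {c : ℝ}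
    (hc : 1 < c) : ∀ᶠ x in atTop, exp (-(c * (b * x ^ p))) ≤ ∫ t in Ioi x, exp (-b * t ^ p) := by
  filter_upwards [eventually_ge_atTop 0, eventually_add_one_rpow_le p hc] with x hx hxc
  refine le_trans ?_ (exp_neg_mul_add_one_rpow_le_setIntegral_Ioi hp hb hx)
  rw [exp_le_exp]
  nlinarith

theorem tendsto_neg_log_const_mul_setIntegral_Ioi_exp_neg_mul_rpow_div (hp : 0 < p) (hb : 0 < b)
    {k : ℝ} (hk : 0 < k) :
    Tendsto (fun x => -log (k * ∫ t in Ioi x, exp (-b * t ^ p)) / (b * x ^ p)) atTop (𝓝 1) := by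
  have hg : Tendsto (fun x : ℝ => b * x ^ p) atTop atTop :=
    (tendsto_rpow_atTop hp).const_mul_atTop hb
  have htail_pos : ∀ᶠ x in atTop, 0 < ∫ t in Ioi x, exp (-b * t ^ p) := by
    filter_upwards [eventually_ge_atTop 0] with x hx
    exact setIntegral_Ioi_exp_pos x (integrableOn_Ioi_exp_neg_mul_rpow hp hb hx)
  have hrate : Tendsto (fun x => -log (∫ t in Ioi x, exp (-b * t ^ p)) / (b * x ^ p))
      atTop (𝓝 1) := by
    refine tendsto_div_nhds_one_of_eventually_le (hg.eventually_gt_atTop 0)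
      (fun c hc => ?_) (fun c hc => ?_)
    · filter_upwards [htail_pos, eventually_setIntegral_Ioi_exp_neg_mul_rpow_le hp hb hc.1 hc.2]
        with x hpos hle
      linarith [(log_le_iff_le_exp hpos).2 hle]
    · filter_upwards [htail_pos, eventually_exp_le_setIntegral_Ioi_exp_neg_mul_rpow hp hb hc]
        with x hpos hle
      linarith [(le_log_iff_exp_le hpos).2 hle]
  refine (hrate.const_add_div_of_tendsto_atTop hg (-log k)).congr' ?_
  filter_upwards [htail_pos] with x hpos
  rw [log_mul hk.ne' hpos.ne', neg_add]

end ExpNegMulRpowTail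

section DensityCDF

variable {f : ℝ → ℝ} {c : ℝ}

theorem one_sub_setIntegral_Iic_const_mul (hf : Integrable f) (hc : c * ∫ t, f t = 1) (x : ℝ) :
    1 - ∫ t in Iic x, c * f t = c * ∫ t in Ioi x, f t := by
  rw [integral_const_mul, ← hc,
    ← intervalIntegral.integral_Iic_add_Ioi (b := x) hf.integrableOn hf.integrableOn]
  ring

theorem tendsto_setIntegral_Iic_const_mul (hf : Integrable f) (hc : c * ∫ t, f t = 1) :
    Tendsto (fun x => ∫ t in Iic x, c * f t) atTop (𝓝 1) := by
  rw [← hc, ← integral_const_mul]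
  exact (aecover_Iic tendsto_id).integral_tendsto_of_countably_generated (hf.const_mul c)

end DensityCDF

theorem integrable_comp_abs_of_integrableOn_Ioi {E : Type*} [NormedAddCommGroup E]
    {f : ℝ → E} (hf : IntegrableOn f (Ioi 0)) : Integrable (fun x => f |x|) := by
  have hIoi : IntegrableOn (fun x => f |x|) (Ioi 0) :=
    hf.congr_fun (fun x hx => by rw [abs_of_pos hx]) measurableSet_Ioi
  have hIic : IntegrableOn (fun x => f |x|) (Iic 0) := by
    simpa using ((integrableOn_Ici_iff_integrableOn_Ioi).mpr hIoi).comp_neg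
  simpa [Iic_union_Ioi] using hIic.union hIoi

section ExpPower

variable {p lam : ℝ}

theorem integrable_exp_neg_mul_abs_rpow (hp : 0 < p) (hlam : 0 < lam) :
    Integrable fun t => exp (-lam * |t| ^ p) :=
  integrable_comp_abs_of_integrableOn_Ioi (f := fun t => exp (-lam * t ^ p))
    (integrableOn_Ioi_exp_neg_mul_rpow hp hlam le_rfl)

theorem expPowerZ_pos (hp : 0 < p) (hlam : 0 < lam) : 0 < expPowerZ p lam :=
  integral_exp_pos (integrable_exp_neg_mul_abs_rpow hp hlam)

theorem one_sub_expPowerCDF (hp : 0 < p) (hlam : 0 < lam) (x : ℝ) :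
    1 - expPowerCDF p lam x = (expPowerZ p lam)⁻¹ * ∫ t in Ioi x, exp (-lam * |t| ^ p) :=
  one_sub_setIntegral_Iic_const_mul (integrable_exp_neg_mul_abs_rpow hp hlam)
    (inv_mul_cancel₀ (expPowerZ_pos hp hlam).ne') x

theorem expPowerCDF_lt_one (hp : 0 < p) (hlam : 0 < lam) (x : ℝ) : expPowerCDF p lam x < 1 := by
  have htail := setIntegral_Ioi_exp_pos x (integrable_exp_neg_mul_abs_rpow hp hlam).integrableOn
  have := one_sub_expPowerCDF hp hlam x
  nlinarith [mul_pos (inv_pos.2 (expPowerZ_pos hp hlam)) htail]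

theorem monotone_expPowerCDF (hp : 0 < p) (hlam : 0 < lam) : Monotone (expPowerCDF p lam) :=
  fun _ _ hxy => setIntegral_mono_set
    ((integrable_exp_neg_mul_abs_rpow hp hlam).const_mul _).integrableOn
    (Eventually.of_forall fun _ => mul_nonneg (inv_pos.2 (expPowerZ_pos hp hlam)).le (exp_pos _).le)
    (Iic_subset_Iic.2 hxy).eventuallyLE

theorem tendsto_neg_log_one_sub_expPowerCDF_div (hp : 0 < p) (hlam : 0 < lam) :
    Tendsto (fun x => -log (1 - expPowerCDF p lam x) / (lam * x ^ p)) atTop (𝓝 1) := by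
  refine (tendsto_neg_log_const_mul_setIntegral_Ioi_exp_neg_mul_rpow_div hp hlam
    (inv_pos.2 (expPowerZ_pos hp hlam))).congr' ?_
  filter_upwards [eventually_ge_atTop 0] with x hx
  have habs : ∫ t in Ioi x, exp (-lam * |t| ^ p) = ∫ t in Ioi x, exp (-lam * t ^ p) :=
    setIntegral_congr_fun measurableSet_Ioi fun t ht => by rw [abs_of_pos (hx.trans_lt ht)]
  rw [one_sub_expPowerCDF hp hlam, habs]

end ExpPower

section StdNormal

theorem integral_exp_neg_sq_div_two : ∫ t : ℝ, exp (-t ^ 2 / 2) = √(2 * π) := by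
  simpa [neg_div, div_eq_inv_mul, div_inv_eq_mul, mul_comm] using integral_gaussian (1 / 2)

theorem integrable_exp_neg_sq_div_two : Integrable fun t : ℝ => exp (-t ^ 2 / 2) := by
  simpa [neg_div, div_eq_inv_mul] using integrable_exp_neg_mul_sq (b := 1 / 2) (by norm_num)

theorem one_div_sqrt_two_pi_mul_integral_exp_neg_sq_div_two : 1 / √(2 * π) * ∫ t : ℝ, exp (-t ^ 2 / 2) = 1 := by
  rw [integral_exp_neg_sq_div_two, one_div_mul_cancel (by positivity)]

theorem tendsto_stdNormalCDF_atTop : Tendsto stdNormalCDF atTop (𝓝 1) :=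
  tendsto_setIntegral_Iic_const_mul integrable_exp_neg_sq_div_two one_div_sqrt_two_pi_mul_integral_exp_neg_sq_div_two

theorem tendsto_neg_log_one_sub_stdNormalCDF_div :
    Tendsto (fun z => -log (1 - stdNormalCDF z) / (z ^ 2 / 2)) atTop (𝓝 1) := by
  refine (tendsto_neg_log_const_mul_setIntegral_Ioi_exp_neg_mul_rpow_div (p := 2) (b := 1 / 2)
    two_pos one_half_pos (by positivity : 0 < 1 / √(2 * π))).congr fun z => ?_
  simp only [rpow_two]
  rw [stdNormalCDF, one_sub_setIntegral_Iic_const_mul integrable_exp_neg_sq_div_two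
    one_div_sqrt_two_pi_mul_integral_exp_neg_sq_div_two]
  ring_nf

end StdNormal

theorem exp_power_transport_asymptotics (p lam : ℝ) (hp : 0 < p) (hlam : 0 < lam)
    (T : ℝ → ℝ) (hT : ∀ z, expPowerCDF p lam (T z) = stdNormalCDF z) :
    Tendsto (fun z => T z / (z ^ 2 / (2 * lam)) ^ (1 / p)) atTop (nhds 1) := by
  have hT_atTop : Tendsto T atTop atTop :=
    tendsto_atTop_of_monotone_of_comp_eq (monotone_expPowerCDF hp hlam)
      (expPowerCDF_lt_one hp hlam) tendsto_stdNormalCDF_atTop hT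
  have hrates : Tendsto (fun z => lam * T z ^ p / (z ^ 2 / 2)) atTop (𝓝 1) := by
    refine tendsto_div_of_tendsto_div_nhds_one ?_ tendsto_neg_log_one_sub_stdNormalCDF_div
    simpa only [Function.comp_def, hT] using
      (tendsto_neg_log_one_sub_expPowerCDF_div hp hlam).comp hT_atTop
  refine tendsto_div_rpow_one_div_of_tendsto_rpow_div hp (hT_atTop.eventually_ge_atTop 0)
    (fun z => by positivity) (hrates.congr fun z => ?_)
  field_simp
end

section
/- Suppose ‖∇T(z)‖ ≤ C·exp(‖z‖²/(2α)) for some α > 2 and C > 0, and that the likelihood is the linear-Gaussian one f(x;y) = C·exp(-‖Ax-y‖²/(2σ²)). Then trace(H) = Z^{-1} ∫ ‖∇_z T(z) ∇_x log f(T(z);y)‖² f(T(z);y) φ⁰(z) dz is finite. -/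
open Real MeasureTheory

/-!
The likelihood tames the score: since `t e^{-t/s} ≤ s`, the product `‖∇ log f‖² f` is bounded
on the whole space. The integrand is therefore at most a constant times
`‖∇T(z)‖² e^{-‖z‖²/2} ≤ C² e^{‖z‖²/α - ‖z‖²/2}`, a Gaussian because `α > 2`.
-/

lemma mul_exp_neg_div_le {s : ℝ} (hs : 0 < s) (t : ℝ) : t * exp (-t / s) ≤ s := by
  have hexp : t / s * exp (-(t / s)) ≤ 1 :=
    (mul_exp_neg_le_exp_neg_one _).trans (exp_le_one_iff.2 (by norm_num))
  calc t * exp (-t / s) = s * (t / s * exp (-(t / s))) := by field_simp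
    _ ≤ s * 1 := by gcongr
    _ = s := mul_one s

section Normed

variable {E F : Type*} [NormedAddCommGroup E] [NormedSpace ℝ E]
  [NormedAddCommGroup F] [NormedSpace ℝ F]

lemma norm_smul_apply_sq_mul_exp_le (L : F →L[ℝ] E) (c : ℝ) {s : ℝ} (hs : 0 < s) (r : F) :
    ‖c • L r‖ ^ 2 * exp (-‖r‖ ^ 2 / s) ≤ c ^ 2 * ‖L‖ ^ 2 * s := by
  have hLr : ‖c • L r‖ ^ 2 ≤ c ^ 2 * ‖L‖ ^ 2 * ‖r‖ ^ 2 := by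
    rw [norm_smul, Real.norm_eq_abs, mul_pow, sq_abs, mul_assoc]
    gcongr
    rw [← mul_pow]
    gcongr
    exact L.le_opNorm r
  calc ‖c • L r‖ ^ 2 * exp (-‖r‖ ^ 2 / s)
      ≤ c ^ 2 * ‖L‖ ^ 2 * ‖r‖ ^ 2 * exp (-‖r‖ ^ 2 / s) := by gcongr
    _ = c ^ 2 * ‖L‖ ^ 2 * (‖r‖ ^ 2 * exp (-‖r‖ ^ 2 / s)) := by ring
    _ ≤ c ^ 2 * ‖L‖ ^ 2 * s := by gcongr; exact mul_exp_neg_div_le hs _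

lemma norm_apply_sq_mul_le_of_le {L : E →L[ℝ] F} {v : E} {w P Q : ℝ} (hw : 0 ≤ w)
    (hL : ‖L‖ ^ 2 ≤ P) (hv : ‖v‖ ^ 2 * w ≤ Q) : ‖L v‖ ^ 2 * w ≤ P * Q :=
  calc ‖L v‖ ^ 2 * w ≤ ‖L‖ ^ 2 * (‖v‖ ^ 2 * w) := by
        rw [← mul_assoc, ← mul_pow]; gcongr; exact L.le_opNorm v
    _ ≤ P * Q := mul_le_mul hL hv (by positivity) ((sq_nonneg _).trans hL)

end Normed

lemma sq_le_of_le_mul_exp_div_two_mul {a C t β : ℝ} (ha : 0 ≤ a)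
    (h : a ≤ C * exp (t / (2 * β))) : a ^ 2 ≤ C ^ 2 * exp (t / β) :=
  calc a ^ 2 ≤ (C * exp (t / (2 * β))) ^ 2 := by gcongr
    _ = C ^ 2 * exp (t / β) := by rw [mul_pow, sq (exp _), ← exp_add]; ring_nf

section Gaussian

variable {V : Type*} [NormedAddCommGroup V] [InnerProductSpace ℝ V] [FiniteDimensional ℝ V]
  [MeasurableSpace V] [BorelSpace V]

lemma integrable_exp_neg_mul_sq_norm {b : ℝ} (hb : 0 < b) :
    Integrable fun v : V => exp (-b * ‖v‖ ^ 2) := by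
  have h := (GaussianFourier.integrable_cexp_neg_mul_sq_norm_add
    (V := V) (b := (b : ℂ)) (by simpa using hb) 0 0).norm
  refine h.congr (ae_of_all _ fun v => ?_)
  simp only [zero_mul, add_zero, Complex.norm_exp]
  norm_cast

lemma integrable_mul_gaussian_of_abs_le_exp {g : V → ℝ} (hg : AEStronglyMeasurable g)
    {K β : ℝ} (hβ : 2 < β) (hbound : ∀ z, |g z| ≤ K * exp (‖z‖ ^ 2 / β)) (c : ℝ) :
    Integrable fun z => g z * (c * exp (-‖z‖ ^ 2 / 2)) := by
  have hb : 0 < 1 / 2 - 1 / β := by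
    have : 1 / β < 1 / 2 := one_div_lt_one_div_of_lt (by norm_num) hβ
    linarith
  refine ((integrable_exp_neg_mul_sq_norm (V := V) hb).const_mul (|c| * K)).mono'
    (hg.mul (by fun_prop : Continuous fun z : V => c * exp (-‖z‖ ^ 2 / 2)).aestronglyMeasurable)
    (ae_of_all _ fun z => ?_)
  have hexp : exp (‖z‖ ^ 2 / β) * exp (-‖z‖ ^ 2 / 2) = exp (-(1 / 2 - 1 / β) * ‖z‖ ^ 2) := by
    rw [← exp_add]; ring_nf
  calc ‖g z * (c * exp (-‖z‖ ^ 2 / 2))‖ = |c| * (|g z| * exp (-‖z‖ ^ 2 / 2)) := by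
        rw [Real.norm_eq_abs, abs_mul, abs_mul, abs_of_pos (exp_pos _)]; ring
    _ ≤ |c| * (K * exp (‖z‖ ^ 2 / β) * exp (-‖z‖ ^ 2 / 2)) := by gcongr; exact hbound z
    _ = |c| * K * exp (-(1 / 2 - 1 / β) * ‖z‖ ^ 2) := by rw [mul_assoc K, hexp, mul_assoc]

end Gaussian

theorem traceH_finite_linear_gaussian_general (d k : ℕ)
    (A : EuclideanSpace ℝ (Fin d) →L[ℝ] EuclideanSpace ℝ (Fin k))
    (y : EuclideanSpace ℝ (Fin k)) (σ C α : ℝ) (hσ : 0 < σ) (hC : 0 < C) (hα : 2 < α)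
    (T : EuclideanSpace ℝ (Fin d) → EuclideanSpace ℝ (Fin d))
    (DT : EuclideanSpace ℝ (Fin d) → (EuclideanSpace ℝ (Fin d) →L[ℝ] EuclideanSpace ℝ (Fin d)))
    (hT_cont : Continuous T) (hDT_cont : Continuous DT)
    (hDT_bound : ∀ z, ‖DT z‖ ≤ C * Real.exp (‖z‖ ^ 2 / (2 * α)))
    -- the linear-Gaussian likelihood and its log-gradient
    (f : EuclideanSpace ℝ (Fin d) → ℝ)
    (hf : ∀ x, f x = C * Real.exp (-‖A x - y‖ ^ 2 / (2 * σ ^ 2)))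
    (gradlogf : EuclideanSpace ℝ (Fin d) → EuclideanSpace ℝ (Fin d))
    (hgrad : ∀ x, gradlogf x = -(1 / σ ^ 2) • (ContinuousLinearMap.adjoint A) (A x - y)) :
    Integrable (fun z : EuclideanSpace ℝ (Fin d) =>
      ‖(DT z) (gradlogf (T z))‖ ^ 2 * f (T z) *
        ((2 * Real.pi) ^ (-(d : ℝ) / 2) * Real.exp (-‖z‖ ^ 2 / 2))) := by
  have hf_cont : Continuous f := by rw [funext hf]; fun_prop
  have hgrad_cont : Continuous gradlogf := by rw [funext hgrad]; fun_prop
  have hf_nonneg : ∀ x, 0 ≤ f x := fun x => by rw [hf]; positivity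
  obtain ⟨M, hscore⟩ : ∃ M, ∀ x, ‖gradlogf x‖ ^ 2 * f x ≤ M := by
    refine ⟨C * ((-(1 / σ ^ 2)) ^ 2 * ‖ContinuousLinearMap.adjoint A‖ ^ 2 * (2 * σ ^ 2)),
      fun x => ?_⟩
    rw [hgrad, hf, mul_left_comm]
    exact mul_le_mul_of_nonneg_left
      (norm_smul_apply_sq_mul_exp_le _ _ (by positivity) _) hC.le
  have hbound : ∀ z,
      |‖DT z (gradlogf (T z))‖ ^ 2 * f (T z)| ≤ C ^ 2 * M * exp (‖z‖ ^ 2 / α) := by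
    intro z
    rw [abs_of_nonneg (mul_nonneg (sq_nonneg _) (hf_nonneg _))]
    exact (norm_apply_sq_mul_le_of_le (hf_nonneg _)
      (sq_le_of_le_mul_exp_div_two_mul (norm_nonneg _) (hDT_bound z)) (hscore _)).trans_eq
      (mul_right_comm _ _ _)
  exact integrable_mul_gaussian_of_abs_le_exp
    (((hDT_cont.clm_apply (hgrad_cont.comp hT_cont)).norm.pow 2).mul
      (hf_cont.comp hT_cont)).aestronglyMeasurable hα hbound _

theorem traceH_finite_linear_gaussian (d k : ℕ)
    (A : EuclideanSpace ℝ (Fin d) →L[ℝ] EuclideanSpace ℝ (Fin k))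
    (y : EuclideanSpace ℝ (Fin k)) (σ C α : ℝ) (hσ : 0 < σ) (hC : 0 < C) (hα : 2 < α)
    (T : EuclideanSpace ℝ (Fin d) → EuclideanSpace ℝ (Fin d))
    (DT : EuclideanSpace ℝ (Fin d) → (EuclideanSpace ℝ (Fin d) →L[ℝ] EuclideanSpace ℝ (Fin d)))
    (hT_diff : ∀ z, HasFDerivAt T (DT z) z) (hT_cont : Continuous T) (hDT_cont : Continuous DT)
    (hDT_bound : ∀ z, ‖DT z‖ ≤ C * Real.exp (‖z‖ ^ 2 / (2 * α)))
    -- the linear-Gaussian likelihood and its log-gradient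
    (f : EuclideanSpace ℝ (Fin d) → ℝ)
    (hf : ∀ x, f x = C * Real.exp (-‖A x - y‖ ^ 2 / (2 * σ ^ 2)))
    (gradlogf : EuclideanSpace ℝ (Fin d) → EuclideanSpace ℝ (Fin d))
    (hgrad : ∀ x, gradlogf x = -(1 / σ ^ 2) • (ContinuousLinearMap.adjoint A) (A x - y)) :
    Integrable (fun z : EuclideanSpace ℝ (Fin d) =>
      ‖(DT z) (gradlogf (T z))‖ ^ 2 * f (T z) *
        ((2 * Real.pi) ^ (-(d : ℝ) / 2) * Real.exp (-‖z‖ ^ 2 / 2))) :=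
  traceH_finite_linear_gaussian_general d k A y σ C α hσ hC hα T DT hT_cont hDT_cont hDT_bound f hf
    gradlogf hgrad
end
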